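/- For Q ≥ 1 and an m×n real matrix α, let g_Q = diag(Q^{n/m} I_m, Q^{−1} I_n) and u_α = [[I_m, α],[0, I_n]], and let Λ_Q = g_Q u_α ℤ^{m+n} with polar (dual) lattice Λ_Q* = ((g_Q u_α)^T)^{−1} ℤ^{m+n}. Suppose the transpose α^T is not δ-approximable for a nonincreasing function δ (i.e. ‖q − α^T p‖ ≤ δ(‖p‖) has no solution (p,q) ∈ ℤ^m×ℤ^n with p ≠ 0 beyond finitely many, and never with q − α^T p = 0, p ≠ 0). Set Δ(Q) = (1/2) Q^{−n/m} δ^{−1}(2C₁/Q) for a constant C₁ ≥ 1. Then for all sufficiently large Q, the only point of Λ_Q* in the box {(p,q) ∈ ℝ^m×ℝ^n : ‖p‖ ≤ 2Δ(Q), ‖q‖ ≤ 2C₁} is the origin. -/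

import Mathlib

/-!
A nonzero point of `Λ_Q*` in the box has the form `(Q^{-n/m} p, Q (q - αᵀ p))`. If `p = 0`, then
`Q ‖q‖ ≤ 2C₁` forces the integer vector `q` to vanish once `Q > 2C₁`. If `p ≠ 0`, the two box
conditions say `‖p‖ ≤ δ⁻¹(2C₁/Q)` and `‖q - αᵀ p‖ ≤ 2C₁/Q`, hence `‖q - αᵀ p‖ ≤ δ(‖p‖)`: so `(p, q)`
is one of the finitely many approximations, all with `q - αᵀ p ≠ 0`. On that finite set
`1/‖q - αᵀ p‖` is bounded by some `B`, which bounds `Q ≤ 2C₁ B`.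
-/

/-- The Euclidean norm of a vector in `Fin k → ℝ`. -/
noncomputable def euclNorm {k : ℕ} (v : Fin k → ℝ) : ℝ :=
  Real.sqrt (∑ i, (v i) ^ 2)

lemma euclNorm_eq_norm {k : ℕ} (v : Fin k → ℝ) :
    euclNorm v = ‖(WithLp.toLp 2 v : EuclideanSpace ℝ (Fin k))‖ := by
  simp [euclNorm, EuclideanSpace.norm_eq]

lemma euclNorm_const_mul {k : ℕ} (c : ℝ) (v : Fin k → ℝ) :
    euclNorm (fun i => c * v i) = |c| * euclNorm v := by
  rw [euclNorm_eq_norm, euclNorm_eq_norm, ← Real.norm_eq_abs, ← norm_smul, ← WithLp.toLp_smul]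
  rfl

lemma euclNorm_pos {k : ℕ} {v : Fin k → ℝ} (hv : v ≠ 0) : 0 < euclNorm v := by
  rw [euclNorm_eq_norm, norm_pos_iff]
  exact fun h => hv (congrArg WithLp.ofLp h)

lemma one_le_euclNorm_intCast {k : ℕ} {w : Fin k → ℤ} (hw : w ≠ 0) :
    1 ≤ euclNorm (fun i => (w i : ℝ)) := by
  obtain ⟨i, hi⟩ := Function.ne_iff.mp hw
  calc (1 : ℝ) ≤ |(w i : ℝ)| := by exact_mod_cast Int.one_le_abs hi
    _ ≤ _ := by
      rw [euclNorm_eq_norm, ← Real.norm_eq_abs]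
      exact PiLp.norm_apply_le (WithLp.toLp 2 fun i => (w i : ℝ)) i

lemma eq_zero_of_euclNorm_intCast_lt_one {k : ℕ} {w : Fin k → ℤ}
    (hw : euclNorm (fun i => (w i : ℝ)) < 1) : w = 0 := by
  by_contra h
  exact (one_le_euclNorm_intCast h).not_gt hw

theorem stmt_8_general (m n : ℕ) (α : Matrix (Fin m) (Fin n) ℝ)
    (δ : ℝ → ℝ)
    -- `δinv` is a generalized inverse of the nonincreasing function `δ`
    (δinv : ℝ → ℝ)
    (hinv : ∀ x y : ℝ, 0 < x → 0 < y → x ≤ δinv y → y ≤ δ x)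
    -- `αᵀ` is not `δ`-approximable: only finitely many solutions with `p ≠ 0` ...
    (hfin : {pq : (Fin m → ℤ) × (Fin n → ℤ) | pq.1 ≠ 0 ∧
        euclNorm ((fun j => (pq.2 j : ℝ)) -
            α.transpose.mulVec (fun i => (pq.1 i : ℝ))) ≤
          δ (euclNorm fun i => (pq.1 i : ℝ))}.Finite)
    -- ... and never an exact solution `q - αᵀ p = 0` with `p ≠ 0`
    (hexact : ∀ (p : Fin m → ℤ) (q : Fin n → ℤ), p ≠ 0 →
        (fun j => (q j : ℝ)) - α.transpose.mulVec (fun i => (p i : ℝ)) ≠ 0)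
    (C₁ : ℝ) (hC₁ : 1 ≤ C₁) :
    -- for all sufficiently large `Q`, the only point of the dual lattice
    -- `Λ_Q* ∋ ((g_Q u_α)ᵀ)⁻¹ (p,q) = (Q^{-n/m} p, Q (q - αᵀ p))` in the box
    -- `‖·‖ ≤ 2Δ(Q)` × `‖·‖ ≤ 2C₁`, with `Δ(Q) = ½ Q^{-n/m} δ⁻¹(2C₁/Q)`, is `0`.
    ∃ Q₀ : ℝ, 1 ≤ Q₀ ∧ ∀ Q : ℝ, Q₀ ≤ Q → ∀ (p : Fin m → ℤ) (q : Fin n → ℤ),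
      euclNorm (fun i => Q ^ (-(n : ℝ) / (m : ℝ)) * (p i : ℝ)) ≤
        2 * ((1 / 2) * Q ^ (-(n : ℝ) / (m : ℝ)) * δinv (2 * C₁ / Q)) →
      euclNorm (fun j => Q *
          ((q j : ℝ) - α.transpose.mulVec (fun i => (p i : ℝ)) j)) ≤ 2 * C₁ →
      p = 0 ∧ q = 0 := by
  set r : (Fin m → ℤ) × (Fin n → ℤ) → Fin n → ℝ := fun pq =>
    (fun j => (pq.2 j : ℝ)) - α.transpose.mulVec (fun i => (pq.1 i : ℝ))
  obtain ⟨B, hB⟩ := (hfin.image fun pq => (euclNorm (r pq))⁻¹).bddAbove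
  refine ⟨max (2 * C₁ + 1) (2 * C₁ * B + 1), le_max_of_le_left (by linarith),
    fun Q hQ₀ p q hp_box hr_box => ?_⟩
  have hQC : 2 * C₁ < Q := by linarith [le_max_left (2 * C₁ + 1) (2 * C₁ * B + 1)]
  have hQB : 2 * C₁ * B < Q := by linarith [le_max_right (2 * C₁ + 1) (2 * C₁ * B + 1)]
  have hQ : 0 < Q := by linarith
  have hscale : 0 < Q ^ (-(n : ℝ) / (m : ℝ)) := Real.rpow_pos_of_pos hQ _
  rw [euclNorm_const_mul, abs_of_pos hscale] at hp_box
  have hr : Q * euclNorm (r (p, q)) ≤ 2 * C₁ := by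
    rw [← abs_of_pos hQ, ← euclNorm_const_mul]
    exact hr_box
  by_cases hp : p = 0
  · subst hp
    refine ⟨rfl, eq_zero_of_euclNorm_intCast_lt_one ?_⟩
    have hr0 : r (0, q) = fun j => (q j : ℝ) := by ext j; simp [r, Matrix.mulVec, dotProduct]
    rw [hr0] at hr
    nlinarith
  · have hr_pos : 0 < euclNorm (r (p, q)) := euclNorm_pos (hexact p q hp)
    have hδ : 2 * C₁ / Q ≤ δ (euclNorm fun i => (p i : ℝ)) :=
      hinv _ _ (by linarith [one_le_euclNorm_intCast hp]) (by positivity)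
        (le_of_mul_le_mul_left (by linarith) hscale)
    have hinvB : (euclNorm (r (p, q)))⁻¹ ≤ B :=
      hB ⟨(p, q), ⟨hp, ((le_div_iff₀ hQ).2 (by linarith)).trans hδ⟩, rfl⟩
    have hQle : Q ≤ 2 * C₁ * B :=
      calc Q ≤ 2 * C₁ / euclNorm (r (p, q)) := (le_div_iff₀ hr_pos).2 hr
        _ ≤ 2 * C₁ * B := by rw [div_eq_mul_inv]; gcongr
    exact absurd hQle hQB.not_ge

theorem stmt_8 (m n : ℕ) (hm : 0 < m) (hn : 0 < n) (α : Matrix (Fin m) (Fin n) ℝ)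
    (δ : ℝ → ℝ) (hδpos : ∀ x : ℝ, 0 < x → 0 < δ x)
    (hδmono : ∀ x y : ℝ, 0 < x → x ≤ y → δ y ≤ δ x)
    -- `δinv` is a generalized inverse of the nonincreasing function `δ`
    (δinv : ℝ → ℝ) (hδinvpos : ∀ y : ℝ, 0 < y → 0 < δinv y)
    (hinv : ∀ x y : ℝ, 0 < x → 0 < y → x ≤ δinv y → y ≤ δ x)
    -- `αᵀ` is not `δ`-approximable: only finitely many solutions with `p ≠ 0` ...
    (hfin : {pq : (Fin m → ℤ) × (Fin n → ℤ) | pq.1 ≠ 0 ∧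
        euclNorm ((fun j => (pq.2 j : ℝ)) -
            α.transpose.mulVec (fun i => (pq.1 i : ℝ))) ≤
          δ (euclNorm fun i => (pq.1 i : ℝ))}.Finite)
    -- ... and never an exact solution `q - αᵀ p = 0` with `p ≠ 0`
    (hexact : ∀ (p : Fin m → ℤ) (q : Fin n → ℤ), p ≠ 0 →
        (fun j => (q j : ℝ)) - α.transpose.mulVec (fun i => (p i : ℝ)) ≠ 0)
    (C₁ : ℝ) (hC₁ : 1 ≤ C₁) :
    -- for all sufficiently large `Q`, the only point of the dual lattice
    -- `Λ_Q* ∋ ((g_Q u_α)ᵀ)⁻¹ (p,q) = (Q^{-n/m} p, Q (q - αᵀ p))` in the box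
    -- `‖·‖ ≤ 2Δ(Q)` × `‖·‖ ≤ 2C₁`, with `Δ(Q) = ½ Q^{-n/m} δ⁻¹(2C₁/Q)`, is `0`.
    ∃ Q₀ : ℝ, 1 ≤ Q₀ ∧ ∀ Q : ℝ, Q₀ ≤ Q → ∀ (p : Fin m → ℤ) (q : Fin n → ℤ),
      euclNorm (fun i => Q ^ (-(n : ℝ) / (m : ℝ)) * (p i : ℝ)) ≤
        2 * ((1 / 2) * Q ^ (-(n : ℝ) / (m : ℝ)) * δinv (2 * C₁ / Q)) →
      euclNorm (fun j => Q *
          ((q j : ℝ) - α.transpose.mulVec (fun i => (p i : ℝ)) j)) ≤ 2 * C₁ →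
      p = 0 ∧ q = 0 :=
  stmt_8_general m n α δ δinv hinv hfin hexact C₁ hC₁
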